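/- arXiv:2509.02105 — 5 statements merged into one kernel-verified Lean document; each statement's English description precedes it below -/
import Mathlib

section
/- Let d ≥ 2 be an integer. A 1-cochain Σ_{i=1}^{d−1} a_i·⟨i⟩ ∈ AC(d)^1 lies in the kernel of the differential δ^1 : AC(d)^1 → AC(d)^2 if and only if the tuple (a_1,…,a_{d−1}) ∈ ℤ^{d−1} satisfies the binomial system for d over ℤ, i.e. C(k,r)·a_k = C(d−r,d−k)·a_r for all integers 0 < r < k < d. -/
noncomputable section

/-- Basis of degree-`k` part of Arone's complex `AC(d)`: strictly increasing sequences
`0 < n₁ < ⋯ < n_k < d`, encoded as `k`-element subsets of `Ioo 0 d`. -/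
def ACBasis (d k : ℕ) : Type :=
  {S : Finset ℕ // S ⊆ Finset.Ioo 0 d ∧ S.card = k}

/-- Degree-`k` part of Arone's complex: the free abelian group on `ACBasis d k`. -/
abbrev ACMod (d k : ℕ) : Type := ACBasis d k →₀ ℤ

/-- The previous entry `n_{j-1}` (with convention `n₀ = 0`) relative to inserting `m` into `S`. -/
def ACprev (S : Finset ℕ) (m : ℕ) : ℕ := WithBot.unbotD 0 ((S.filter (· < m)).max)

/-- The next entry `n_j` (with convention `n_{k+1} = d`) relative to inserting `m` into `S`. -/
def ACnext (d : ℕ) (S : Finset ℕ) (m : ℕ) : ℕ := WithTop.untopD d ((S.filter (fun x => m < x)).min)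

/-- The coefficient `(-1)^j * C(n_j - n_{j-1}, m - n_{j-1})` of the differential. -/
def ACcoef (d : ℕ) (S : Finset ℕ) (m : ℕ) : ℤ :=
  (-1 : ℤ) ^ ((S.filter (· < m)).card + 1) *
    (Nat.choose (ACnext d S m - ACprev S m) (m - ACprev S m) : ℤ)

/-- Image of the basis element `⟨S⟩` under the differential. -/
def ACdiffSingle (d k : ℕ) (S : ACBasis d k) : ACMod d (k + 1) :=
  ∑ m ∈ (Finset.Ioo 0 d \ S.1).attach,
    ACcoef d S.1 (m : ℕ) •
      Finsupp.single
        (⟨insert (m : ℕ) S.1, by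
          obtain ⟨hm1, hm2⟩ := Finset.mem_sdiff.mp m.2
          exact ⟨Finset.insert_subset hm1 S.2.1, by
            rw [Finset.card_insert_of_notMem hm2, S.2.2]⟩⟩ : ACBasis d (k + 1)) (1 : ℤ)

/-- The differential `δᵏ : AC(d)ᵏ → AC(d)^{k+1}` of Arone's complex. -/
def ACdiff (d k : ℕ) : ACMod d k →ₗ[ℤ] ACMod d (k + 1) :=
  Finsupp.lsum ℤ fun S => LinearMap.toSpanSingleton ℤ (ACMod d (k + 1)) (ACdiffSingle d k S)

/-- The `k`-cocycles of Arone's complex. -/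
def ACZ (d k : ℕ) : Submodule ℤ (ACMod d k) := LinearMap.ker (ACdiff d k)

/-- The `k`-coboundaries of Arone's complex (`0` in degree `0`). -/
def ACB (d : ℕ) : (k : ℕ) → Submodule ℤ (ACMod d k)
  | 0 => ⊥
  | k + 1 => LinearMap.range (ACdiff d k)

/-- The `k`-th cohomology of Arone's complex, as cocycles modulo coboundaries. -/
abbrev ACH (d k : ℕ) :=
  ACZ d k ⧸ Submodule.comap (ACZ d k).subtype (ACB d k)

/-- The cohomology class of a cocycle. -/
def ACHmk (d k : ℕ) (z : ACZ d k) : ACH d k := Submodule.Quotient.mk z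


/-- The basis element `⟨i⟩` of `AC(d)¹` (junk value `0` if `i ∉ (0,d)`). -/
def ACsing (d i : ℕ) : ACMod d 1 :=
  if h : 0 < i ∧ i < d then
    Finsupp.single
      (⟨{i}, by
        refine ⟨?_, Finset.card_singleton i⟩
        simpa [Finset.singleton_subset_iff, Finset.mem_Ioo] using h⟩ : ACBasis d 1) (1 : ℤ)
  else 0

lemma ACcoef_lt (d i m : ℕ) (h : m < i) :
    ACcoef d {i} m = -(Nat.choose i m : ℤ) := by
  simp [ACcoef, ACprev, ACnext, Finset.filter_singleton, h, not_lt.mpr h.le]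
  rfl

lemma ACcoef_gt (d i m : ℕ) (h : i < m) :
    ACcoef d {i} m = (Nat.choose (d - i) (m - i) : ℤ) := by
  simp [ACcoef, ACprev, ACnext, Finset.filter_singleton, h, not_lt.mpr h.le]

lemma diffSingle_apply (d k : ℕ) (S : ACBasis d k) (T : ACBasis d (k + 1)) :
    ACdiffSingle d k S T =
      ∑ m ∈ Finset.Ioo 0 d \ S.1,
        ACcoef d S.1 m * (if insert m S.1 = T.1 then 1 else 0) := by
  classical
  unfold ACdiffSingle
  erw [Finsupp.finset_sum_apply]
  rw [← Finset.sum_attach (Finset.Ioo 0 d \ S.1)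
      (fun m => ACcoef d S.1 m * (if insert m S.1 = T.1 then 1 else 0))]
  refine Finset.sum_congr rfl fun m _ => ?_
  erw [Finsupp.smul_apply, Finsupp.single_apply]
  rw [smul_eq_mul]
  congr 1
  by_cases hT : insert (↑m) S.1 = T.1
  · rw [if_pos hT]
    exact if_pos (Subtype.ext hT)
  · rw [if_neg hT]
    exact if_neg (fun h => hT (congrArg Subtype.val h))

lemma ACdiff_sing (d i : ℕ) (h1 : 0 < i) (h2 : i < d) :
    ACdiff d 1 (ACsing d i) = ACdiffSingle d 1
      ⟨{i}, by
        refine ⟨?_, Finset.card_singleton i⟩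
        simpa [Finset.singleton_subset_iff, Finset.mem_Ioo] using ⟨h1, h2⟩⟩ := by
  rw [ACsing, dif_pos ⟨h1, h2⟩, ACdiff]
  simp
  erw [Finsupp.sum_single_index] <;> simp

lemma sing_eval (d r k : ℕ) (hr0 : 0 < r) (hrk : r < k) (hkd : k < d)
    (i : ℕ) (hSi : ({i} : Finset ℕ) ⊆ Finset.Ioo 0 d ∧ ({i} : Finset ℕ).card = 1)
    (T : ACBasis d 2) (hT : T.1 = {r, k}) :
    ACdiffSingle d 1 ⟨{i}, hSi⟩ T =
      if i = r then (Nat.choose (d - r) (k - r) : ℤ)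
      else if i = k then -(Nat.choose k r : ℤ) else 0 := by
  classical
  have hi : i ∈ Finset.Ioo 0 d := hSi.1 (Finset.mem_singleton_self i)
  refine (diffSingle_apply d 1 _ T).trans ?_
  simp only [hT]
  by_cases hir : i = r
  · subst hir
    rw [if_pos rfl]
    have hstep : ∀ m ∈ Finset.Ioo 0 d \ {i},
        ACcoef d {i} m * (if insert m {i} = ({i, k} : Finset ℕ) then 1 else 0) =
          if m = k then ACcoef d {i} m else 0 := by
      intro m hm
      have hmi : m ≠ i := by
        simp only [Finset.mem_sdiff, Finset.mem_singleton] at hm; exact hm.2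
      by_cases hmk : m = k
      · subst hmk
        rw [if_pos (by rw [Finset.pair_comm]), if_pos rfl, mul_one]
      · rw [if_neg, if_neg hmk, mul_zero]
        intro h
        have : m ∈ ({i, k} : Finset ℕ) := h ▸ Finset.mem_insert_self m {i}
        rcases Finset.mem_insert.mp this with h' | h'
        · exact hmi h'
        · exact hmk (Finset.mem_singleton.mp h')
    rw [Finset.sum_congr rfl hstep, Finset.sum_ite_eq']
    have hk' : k ∈ Finset.Ioo 0 d \ {i} := by
      simp only [Finset.mem_sdiff, Finset.mem_Ioo, Finset.mem_singleton]
      exact ⟨⟨hr0.trans hrk, hkd⟩, hrk.ne'⟩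
    rw [if_pos hk', ACcoef_gt d i k hrk]
  · rw [if_neg hir]
    by_cases hik : i = k
    · subst hik
      rw [if_pos rfl]
      have hstep : ∀ m ∈ Finset.Ioo 0 d \ {i},
          ACcoef d {i} m * (if insert m {i} = ({r, i} : Finset ℕ) then 1 else 0) =
            if m = r then ACcoef d {i} m else 0 := by
        intro m hm
        have hmi : m ≠ i := by
          simp only [Finset.mem_sdiff, Finset.mem_singleton] at hm; exact hm.2
        by_cases hmr : m = r
        · subst hmr
          rw [if_pos rfl, if_pos rfl, mul_one]
        · rw [if_neg, if_neg hmr, mul_zero]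
          intro h
          have : m ∈ ({r, i} : Finset ℕ) := h ▸ Finset.mem_insert_self m {i}
          rcases Finset.mem_insert.mp this with h' | h'
          · exact hmr h'
          · exact hmi (Finset.mem_singleton.mp h')
      rw [Finset.sum_congr rfl hstep, Finset.sum_ite_eq']
      have hr' : r ∈ Finset.Ioo 0 d \ {i} := by
        simp only [Finset.mem_sdiff, Finset.mem_Ioo, Finset.mem_singleton]
        exact ⟨⟨hr0, hrk.trans hkd⟩, hrk.ne⟩
      rw [if_pos hr', ACcoef_lt d i r hrk]
    · rw [if_neg hik]
      refine Finset.sum_eq_zero fun m hm => ?_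
      rw [if_neg, mul_zero]
      intro h
      have : i ∈ ({r, k} : Finset ℕ) := h ▸ Finset.mem_insert_of_mem (Finset.mem_singleton_self i)
      rcases Finset.mem_insert.mp this with h' | h'
      · exact hir h'
      · exact hik (Finset.mem_singleton.mp h')

lemma key_eval (d : ℕ) (a : ℕ → ℤ) (r k : ℕ) (hr : 0 < r) (hrk : r < k) (hk : k < d)
    (T : ACBasis d 2) (hT : T.1 = {r, k}) :
    (ACdiff d 1 (∑ i ∈ Finset.Ioo 0 d, a i • ACsing d i)) T =
      (Nat.choose (d - r) (k - r) : ℤ) * a r - (Nat.choose k r : ℤ) * a k := by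
  classical
  rw [map_sum, Finsupp.finset_sum_apply]
  have hrmem : r ∈ Finset.Ioo 0 d := Finset.mem_Ioo.mpr ⟨hr, hrk.trans hk⟩
  have hkmem : k ∈ Finset.Ioo 0 d := Finset.mem_Ioo.mpr ⟨hr.trans hrk, hk⟩
  have hstep : ∀ i ∈ Finset.Ioo 0 d,
      (ACdiff d 1 (a i • ACsing d i)) T =
        (if i = r then (Nat.choose (d - r) (k - r) : ℤ) * a r else 0) +
          (if i = k then -((Nat.choose k r : ℤ) * a k) else 0) := by
    intro i hi
    obtain ⟨h1, h2⟩ := Finset.mem_Ioo.mp hi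
    rw [map_smul, Finsupp.smul_apply, ACdiff_sing d i h1 h2, sing_eval d r k hr hrk hk i _ T hT,
      smul_eq_mul]
    by_cases hir : i = r
    · subst hir
      rw [if_pos rfl, if_pos rfl, if_neg hrk.ne, add_zero, mul_comm]
    · rw [if_neg hir, if_neg hir, zero_add]
      by_cases hik : i = k
      · subst hik
        rw [if_pos rfl, if_pos rfl]
        ring
      · rw [if_neg hik, if_neg hik, mul_zero]
  rw [Finset.sum_congr rfl hstep, Finset.sum_add_distrib, Finset.sum_ite_eq',
    Finset.sum_ite_eq', if_pos hrmem, if_pos hkmem]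
  ring

lemma csymm (d r k : ℕ) (hrk : r < k) (hk : k < d) :
    Nat.choose (d - r) (k - r) = Nat.choose (d - r) (d - k) := by
  have h1 : d - k = (d - r) - (k - r) := by omega
  rw [h1, Nat.choose_symm (show k - r ≤ d - r by omega)]

/-- a 1-cochain `∑_{i=1}^{d-1} aᵢ⟨i⟩` is a 1-cocycle of Arone's complex iff
`(a₁,…,a_{d-1})` satisfies the binomial system `C(k,r)·a_k = C(d-r,d-k)·a_r` for `0 < r < k < d`. -/
theorem cocycle_iff_binomialSystem (d : ℕ) (hd : 2 ≤ d) (a : ℕ → ℤ) :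
    ACdiff d 1 (∑ i ∈ Finset.Ioo 0 d, a i • ACsing d i) = 0 ↔
      ∀ r k : ℕ, 0 < r → r < k → k < d →
        (Nat.choose k r : ℤ) * a k = (Nat.choose (d - r) (d - k) : ℤ) * a r := by
  constructor
  · intro h r k hr hrk hk
    have hmem : ({r, k} : Finset ℕ) ⊆ Finset.Ioo 0 d ∧ ({r, k} : Finset ℕ).card = 2 := by
      constructor
      · intro x hx
        rcases Finset.mem_insert.mp hx with h' | h'
        · subst h'; exact Finset.mem_Ioo.mpr ⟨hr, hrk.trans hk⟩
        · rw [Finset.mem_singleton.mp h']; exact Finset.mem_Ioo.mpr ⟨hr.trans hrk, hk⟩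
      · rw [Finset.card_insert_of_notMem (by simp [hrk.ne]), Finset.card_singleton]
    have hkey := key_eval d a r k hr hrk hk ⟨{r, k}, hmem⟩ rfl
    rw [h] at hkey
    erw [Finsupp.zero_apply] at hkey
    rw [← csymm d r k hrk hk]
    linarith
  · intro h
    ext T
    rw [Finsupp.zero_apply]
    obtain ⟨x, y, hxy, hTx⟩ := Finset.card_eq_two.mp T.2.2
    have hxm : x ∈ Finset.Ioo 0 d := T.2.1 (hTx ▸ Finset.mem_insert_self x {y})
    have hym : y ∈ Finset.Ioo 0 d :=
      T.2.1 (hTx ▸ Finset.mem_insert_of_mem (Finset.mem_singleton_self y))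
    obtain ⟨hx0, hxd⟩ := Finset.mem_Ioo.mp hxm
    obtain ⟨hy0, hyd⟩ := Finset.mem_Ioo.mp hym
    rcases lt_or_gt_of_ne hxy with hlt | hlt
    · rw [key_eval d a x y hx0 hlt hyd T hTx, csymm d x y hlt hyd]
      linarith [h x y hx0 hlt hyd]
    · rw [key_eval d a y x hy0 hlt hxd T (hTx.trans (Finset.pair_comm x y)),
        csymm d y x hlt hxd]
      linarith [h y x hy0 hlt hxd]

end
end

section
/- Let d ≥ 1 be an integer. The first cohomology group H^1(AC(d)) of Arone's complex is isomorphic to ℤ/p if d = p^l for some prime p and some integer l ≥ 1, and is zero otherwise. Moreover, in the first case a generator of H^1(AC(d)) is given by the cohomology class of the 1-cocycle Σ_{k=1}^{p^l−1} (1/p)·C(p^l,k)·⟨k⟩, i.e. the tuple ((1/p)C(p^l,1), (1/p)C(p^l,2), …, (1/p)C(p^l,p^l−1)) ∈ ℤ^{p^l−1}. -/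
noncomputable section

----------------- plumbing -----------------

open Finset

variable {d : ℕ}

private def e0 (d : ℕ) : ACBasis d 0 := ⟨∅, by simp⟩

private lemma eq_e0 (S : ACBasis d 0) : S = e0 d :=
  Subtype.ext (Finset.card_eq_zero.mp S.2.2)

private def b1 {i : ℕ} (hi : i ∈ Finset.Ioo 0 d) : ACBasis d 1 :=
  ⟨{i}, by simp [Finset.singleton_subset_iff, hi]⟩

private lemma b1_ne {i j : ℕ} (hi : i ∈ Finset.Ioo 0 d) (hj : j ∈ Finset.Ioo 0 d)
    (h : i ≠ j) : b1 hi ≠ b1 hj := by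
  intro hc
  exact h (Finset.singleton_inj.mp (congrArg Subtype.val hc))

private def b2 {a b : ℕ} (ha : a ∈ Finset.Ioo 0 d) (hb : b ∈ Finset.Ioo 0 d) (hab : a ≠ b) :
    ACBasis d 2 :=
  ⟨{a, b}, by
    refine ⟨?_, ?_⟩
    · intro x hx
      rcases Finset.mem_insert.mp hx with rfl | hx
      · exact ha
      · rw [Finset.mem_singleton.mp hx]; exact hb
    · rw [Finset.card_insert_of_notMem (by simp [hab]), Finset.card_singleton]⟩

private lemma ACsing_eq {i : ℕ} (hi : i ∈ Finset.Ioo 0 d) :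
    ACsing d i = Finsupp.single (b1 hi) 1 := by
  rw [Finset.mem_Ioo] at hi
  rw [ACsing, dif_pos hi]
  rfl

private lemma sum_sing_apply (n : ℕ → ℤ) {i : ℕ} (hi : i ∈ Finset.Ioo 0 d) :
    (∑ k ∈ Finset.Ioo 0 d, n k • ACsing d k) (b1 hi) = n i := by
  classical
  rw [Finset.sum_apply', Finset.sum_eq_single_of_mem i hi]
  · rw [ACsing_eq hi, Finsupp.smul_apply, Finsupp.single_eq_same, smul_eq_mul, mul_one]
  · intro k hk hki
    rw [ACsing_eq hk, Finsupp.smul_apply, Finsupp.single_apply,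
      if_neg (b1_ne hk hi hki), smul_zero]

private lemma ext1 {x y : ACMod d 1}
    (h : ∀ (i : ℕ) (hi : i ∈ Finset.Ioo 0 d), x (b1 hi) = y (b1 hi)) : x = y := by
  ext T
  obtain ⟨i, hTi⟩ := Finset.card_eq_one.mp T.2.2
  have hi : i ∈ Finset.Ioo 0 d := T.2.1 (by simp [hTi])
  have hT : T = b1 hi := Subtype.ext hTi
  rw [hT]; exact h i hi

private lemma ACdiff_single (k : ℕ) (S : ACBasis d k) (c : ℤ) :
    ACdiff d k (Finsupp.single S c) = c • ACdiffSingle d k S := by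
  rw [ACdiff, Finsupp.lsum_single, LinearMap.toSpanSingleton_apply]

private lemma ACdiffSingle_apply_eq {k : ℕ} (S : ACBasis d k) (T : ACBasis d (k+1)) {m0 : ℕ}
    (hm0 : m0 ∈ Finset.Ioo 0 d \ S.1) (hins : insert m0 S.1 = T.1)
    (huniq : ∀ m ∈ Finset.Ioo 0 d \ S.1, insert m S.1 = T.1 → m = m0) :
    ACdiffSingle d k S T = ACcoef d S.1 m0 := by
  classical
  rw [ACdiffSingle]
  erw [Finset.sum_apply']
  rw [Finset.sum_eq_single_of_mem (⟨m0, hm0⟩ : {x // x ∈ Finset.Ioo 0 d \ S.1})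
      (Finset.mem_attach _ _)]
  · erw [Finsupp.smul_apply, Finsupp.single_apply, if_pos (Subtype.ext hins), smul_eq_mul, mul_one]
  · intro m _ hm
    erw [Finsupp.smul_apply, Finsupp.single_apply, if_neg, smul_zero]
    intro hc
    exact hm (Subtype.ext (huniq m m.2 (congrArg Subtype.val hc)))

private lemma ACdiffSingle_apply_zero {k : ℕ} (S : ACBasis d k) (T : ACBasis d (k+1))
    (h : ∀ m ∈ Finset.Ioo 0 d \ S.1, insert m S.1 ≠ T.1) :
    ACdiffSingle d k S T = 0 := by
  classical
  rw [ACdiffSingle]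
  erw [Finset.sum_apply']
  apply Finset.sum_eq_zero
  intro m _
  erw [Finsupp.smul_apply, Finsupp.single_apply,
    if_neg (fun hc => h m m.2 (congrArg Subtype.val hc)), smul_zero]

private lemma ACcoef_singleton_lt {a b : ℕ} (hab : a < b) :
    ACcoef d {a} b = (Nat.choose (d - a) (b - a) : ℤ) := by
  rw [ACcoef, ACprev, ACnext, Finset.filter_singleton, if_pos hab,
    Finset.filter_singleton, if_neg (by omega)]
  simp

private lemma ACcoef_singleton_gt {a b : ℕ} (hab : a < b) :
    ACcoef d {b} a = -(Nat.choose b a : ℤ) := by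
  rw [ACcoef, ACprev, ACnext, Finset.filter_singleton, if_neg (by omega),
    Finset.filter_singleton, if_pos hab]
  simp only [Finset.card_empty, pow_one, Finset.max_empty, WithBot.unbotD_bot,
    Finset.min_singleton, WithTop.untopD_coe, Nat.sub_zero, neg_mul, one_mul]
  ring

private lemma ACcoef_empty {m : ℕ} : ACcoef d ∅ m = -(Nat.choose d m : ℤ) := by
  rw [ACcoef, ACprev, ACnext]
  simp


private lemma ACdiffSingle_b1_lt {a b : ℕ} (ha : a ∈ Finset.Ioo 0 d) (hb : b ∈ Finset.Ioo 0 d)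
    (hab : a < b) :
    ACdiffSingle d 1 (b1 ha) (b2 ha hb hab.ne) = (Nat.choose (d - a) (b - a) : ℤ) := by
  have h := ACdiffSingle_apply_eq (b1 ha) (b2 ha hb hab.ne) (m0 := b)
    (by
      rw [Finset.mem_sdiff]
      refine ⟨hb, ?_⟩
      show b ∉ ({a} : Finset ℕ)
      simp [hab.ne'])
    (by
      show insert b {a} = ({a, b} : Finset ℕ)
      rw [Finset.pair_comm])
    (by
      intro m hm hins
      have hins' : insert m ({a} : Finset ℕ) = ({a, b} : Finset ℕ) := hins
      have hmm : m ∈ ({a, b} : Finset ℕ) := by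
        rw [← hins']; exact Finset.mem_insert_self _ _
      have hm' : m ∉ ({a} : Finset ℕ) := (Finset.mem_sdiff.mp hm).2
      rcases Finset.mem_insert.mp hmm with rfl | h
      · exact absurd (by simp : m ∈ ({m} : Finset ℕ)) hm'
      · exact Finset.mem_singleton.mp h)
  rw [h]
  exact ACcoef_singleton_lt hab

private lemma ACdiffSingle_b1_gt {a b : ℕ} (ha : a ∈ Finset.Ioo 0 d) (hb : b ∈ Finset.Ioo 0 d)
    (hab : a < b) :
    ACdiffSingle d 1 (b1 hb) (b2 ha hb hab.ne) = -(Nat.choose b a : ℤ) := by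
  have h := ACdiffSingle_apply_eq (b1 hb) (b2 ha hb hab.ne) (m0 := a)
    (by
      rw [Finset.mem_sdiff]
      refine ⟨ha, ?_⟩
      show a ∉ ({b} : Finset ℕ)
      simp [hab.ne])
    (by rfl)
    (by
      intro m hm hins
      have hins' : insert m ({b} : Finset ℕ) = ({a, b} : Finset ℕ) := hins
      have hmm : m ∈ ({a, b} : Finset ℕ) := by
        rw [← hins']; exact Finset.mem_insert_self _ _
      have hm' : m ∉ ({b} : Finset ℕ) := (Finset.mem_sdiff.mp hm).2
      rcases Finset.mem_insert.mp hmm with rfl | h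
      · rfl
      · exact absurd (by simp [Finset.mem_singleton.mp h] : m ∈ ({b} : Finset ℕ)) hm')
  rw [h]
  exact ACcoef_singleton_gt hab

private lemma ACdiffSingle_b1_other {a b : ℕ} (ha : a ∈ Finset.Ioo 0 d) (hb : b ∈ Finset.Ioo 0 d)
    (hab : a < b) (S : ACBasis d 1) (hSa : S ≠ b1 ha) (hSb : S ≠ b1 hb) :
    ACdiffSingle d 1 S (b2 ha hb hab.ne) = 0 := by
  obtain ⟨s, hs⟩ := Finset.card_eq_one.mp S.2.2
  apply ACdiffSingle_apply_zero
  intro m hm hins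
  have hins' : insert m S.1 = ({a, b} : Finset ℕ) := hins
  have hsab : s ∈ ({a, b} : Finset ℕ) := by
    rw [← hins']
    apply Finset.mem_insert_of_mem
    rw [hs]; simp
  rcases Finset.mem_insert.mp hsab with rfl | h
  · exact hSa (Subtype.ext hs)
  · refine hSb (Subtype.ext ?_)
    show S.1 = ({b} : Finset ℕ)
    rw [hs, Finset.mem_singleton.mp h]

private lemma ACdiff1_apply (x : ACMod d 1) {a b : ℕ} (ha : a ∈ Finset.Ioo 0 d)
    (hb : b ∈ Finset.Ioo 0 d) (hab : a < b) :
    ACdiff d 1 x (b2 ha hb hab.ne) =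
      (Nat.choose (d - a) (b - a) : ℤ) * x (b1 ha) - (Nat.choose b a : ℤ) * x (b1 hb) := by
  classical
  have hne : b1 ha ≠ b1 hb := b1_ne ha hb hab.ne
  rw [ACdiff, Finsupp.lsum_apply, Finsupp.sum_apply, Finsupp.sum]
  simp only [LinearMap.toSpanSingleton_apply, Finsupp.smul_apply, smul_eq_mul]
  have h1 : ∑ S ∈ x.support, x S * ACdiffSingle d 1 S (b2 ha hb hab.ne)
      = ∑ S ∈ x.support ∪ {b1 ha, b1 hb}, x S * ACdiffSingle d 1 S (b2 ha hb hab.ne) := by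
    apply Finset.sum_subset Finset.subset_union_left
    intro S _ hS
    rw [Finsupp.notMem_support_iff.mp hS, zero_mul]
  have h2 : ∑ S ∈ ({b1 ha, b1 hb} : Finset (ACBasis d 1)),
        x S * ACdiffSingle d 1 S (b2 ha hb hab.ne)
      = ∑ S ∈ x.support ∪ {b1 ha, b1 hb}, x S * ACdiffSingle d 1 S (b2 ha hb hab.ne) := by
    apply Finset.sum_subset Finset.subset_union_right
    intro S _ hS
    rw [Finset.mem_insert, Finset.mem_singleton] at hS
    push_neg at hS
    rw [ACdiffSingle_b1_other ha hb hab S hS.1 hS.2, mul_zero]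
  rw [h1, ← h2, Finset.sum_pair hne, ACdiffSingle_b1_lt ha hb hab, ACdiffSingle_b1_gt ha hb hab]
  ring

private lemma ACZ1_rel {x : ACMod d 1} (hx : x ∈ ACZ d 1) {a b : ℕ}
    (ha : a ∈ Finset.Ioo 0 d) (hb : b ∈ Finset.Ioo 0 d) (hab : a < b) :
    (Nat.choose (d - a) (b - a) : ℤ) * x (b1 ha) = (Nat.choose b a : ℤ) * x (b1 hb) := by
  have h := DFunLike.congr_fun (LinearMap.mem_ker.mp hx) (b2 ha hb hab.ne)
  rw [ACdiff1_apply x ha hb hab] at h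
  rw [Finsupp.zero_apply] at h
  linarith

private lemma mem_ACZ1 {x : ACMod d 1}
    (h : ∀ {a b : ℕ} (ha : a ∈ Finset.Ioo 0 d) (hb : b ∈ Finset.Ioo 0 d), a < b →
      (Nat.choose (d - a) (b - a) : ℤ) * x (b1 ha) = (Nat.choose b a : ℤ) * x (b1 hb)) :
    x ∈ ACZ d 1 := by
  rw [ACZ, LinearMap.mem_ker]
  ext T
  rw [Finsupp.zero_apply]
  obtain ⟨a, b, hne, hT⟩ := Finset.card_eq_two.mp T.2.2
  have ha : a ∈ Finset.Ioo 0 d := T.2.1 (by rw [hT]; exact Finset.mem_insert_self _ _)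
  have hb : b ∈ Finset.Ioo 0 d := T.2.1 (by rw [hT]; simp)
  rcases hne.lt_or_gt with h' | h'
  · have hTT : T = b2 ha hb hne := Subtype.ext hT
    rw [hTT, ACdiff1_apply x ha hb h', h ha hb h', sub_self]
  · have hTT : T = b2 hb ha hne.symm := Subtype.ext (by rw [hT]; exact Finset.pair_comm a b)
    rw [hTT, ACdiff1_apply x hb ha h', h hb ha h', sub_self]

private lemma wcoef {i : ℕ} (hi : i ∈ Finset.Ioo 0 d) :
    ACdiffSingle d 0 (e0 d) (b1 hi) = -(Nat.choose d i : ℤ) := by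
  have h := ACdiffSingle_apply_eq (e0 d) (b1 hi) (m0 := i)
    (by
      rw [Finset.mem_sdiff]
      refine ⟨hi, ?_⟩
      show i ∉ (∅ : Finset ℕ)
      simp)
    (by show insert i (∅ : Finset ℕ) = ({i} : Finset ℕ); simp)
    (by
      intro m hm hins
      have hins' : insert m (∅ : Finset ℕ) = ({i} : Finset ℕ) := hins
      have : m ∈ ({i} : Finset ℕ) := by
        rw [← hins']; exact Finset.mem_insert_self _ _
      exact Finset.mem_singleton.mp this)
  rw [h]
  exact ACcoef_empty

private lemma mem_ACB1 {x : ACMod d 1} :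
    x ∈ ACB d 1 ↔ ∃ t : ℤ, x = t • ACdiffSingle d 0 (e0 d) := by
  show x ∈ LinearMap.range (ACdiff d 0) ↔ _
  constructor
  · rintro ⟨v, rfl⟩
    refine ⟨v (e0 d), ?_⟩
    have hv : v = Finsupp.single (e0 d) (v (e0 d)) := by
      ext S
      rw [eq_e0 S, Finsupp.single_eq_same]
    conv_lhs => rw [hv]
    rw [ACdiff_single]
  · rintro ⟨t, rfl⟩
    exact ⟨Finsupp.single (e0 d) t, ACdiff_single 0 (e0 d) t⟩



lemma NT1 {p l : ℕ} (hp : p.Prime) (hl : 1 ≤ l) :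
    ¬ (p ^ 2 ∣ (p ^ l).choose (p ^ (l - 1))) := by
  have hle : p ^ (l - 1) ≤ p ^ l := Nat.pow_le_pow_right hp.pos (by omega)
  have h := Nat.Prime.emultiplicity_choose_prime_pow hp hle (pow_ne_zero _ hp.pos.ne')
  rw [multiplicity_pow_self_of_prime hp.prime] at h
  intro hdvd
  have h2 : (2 : ℕ∞) ≤ emultiplicity p ((p ^ l).choose (p ^ (l-1))) :=
    pow_dvd_iff_le_emultiplicity.mp hdvd
  rw [h, (by omega : l - (l - 1) = 1)] at h2
  exact absurd h2 (by norm_num)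




lemma NT2 {q d m : ℕ} (hq : q.Prime) (hd : 0 < d) (hm : q ^ m ∣ d)
    (hm2 : ¬ q ^ (m + 1) ∣ d) : ¬ q ∣ d.choose (q ^ m) := by
  have hqm_pos : 0 < q ^ m := Nat.pow_pos hq.pos
  have hkn : q ^ m ≤ d := Nat.le_of_dvd hd hm
  have h := Nat.Prime.emultiplicity_choose hq hkn (Nat.lt_succ_self (Nat.log q d))
  have hempty : ({i ∈ Ico 1 (Nat.log q d).succ |
      q ^ i ≤ q ^ m % q ^ i + (d - q ^ m) % q ^ i}) = ∅ := by
    rw [Finset.eq_empty_iff_forall_notMem]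
    intro i hi
    rw [Finset.mem_filter, Finset.mem_Ico] at hi
    obtain ⟨⟨hi1, _⟩, hcond⟩ := hi
    have hqi_pos : 0 < q ^ i := Nat.pow_pos hq.pos
    rcases le_or_gt i m with him | him
    · have h1 : q ^ m % q ^ i = 0 := Nat.mod_eq_zero_of_dvd (pow_dvd_pow q him)
      have h2 : (d - q ^ m) % q ^ i = 0 := Nat.mod_eq_zero_of_dvd
        (Nat.dvd_sub ((pow_dvd_pow q him).trans hm) (pow_dvd_pow q him))
      omega
    · have hdvd_i : ¬ q ^ i ∣ d := fun hc => hm2 ((pow_dvd_pow q (by omega)).trans hc)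
      have hlt : q ^ m < q ^ i := Nat.pow_lt_pow_right hq.one_lt him
      have h1 : q ^ m % q ^ i = q ^ m := Nat.mod_eq_of_lt hlt
      set r := d % q ^ i with hr
      have hrlt : r < q ^ i := Nat.mod_lt _ hqi_pos
      have hr0 : r ≠ 0 := fun hc => hdvd_i (Nat.dvd_of_mod_eq_zero hc)
      have hdm : d = q ^ i * (d / q ^ i) + r := (Nat.div_add_mod d (q ^ i)).symm
      have hrm : q ^ m ∣ r := by
        have h3 : q ^ m ∣ q ^ i * (d / q ^ i) := Dvd.dvd.mul_right (pow_dvd_pow q him.le) _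
        have h4 : r = d - q ^ i * (d / q ^ i) := by omega
        rw [h4]; exact Nat.dvd_sub hm h3
      have hrge : q ^ m ≤ r := Nat.le_of_dvd (Nat.pos_of_ne_zero hr0) hrm
      have h2 : (d - q ^ m) % q ^ i = r - q ^ m := by
        have h5 : d - q ^ m = (r - q ^ m) + q ^ i * (d / q ^ i) := by omega
        rw [h5, Nat.add_mul_mod_self_left, Nat.mod_eq_of_lt (by omega)]
      omega
  rw [hempty] at h
  simp only [Finset.card_empty, Nat.cast_zero] at h
  intro hdvd
  have h2 : (1 : ℕ∞) ≤ emultiplicity q (d.choose (q ^ m)) :=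
    pow_dvd_iff_le_emultiplicity.mp (by simpa using hdvd)
  rw [h] at h2
  exact absurd h2 (by norm_num)

private lemma gcd_one {d : ℕ} (c : ℕ → ℕ)
    (h : ∀ q : ℕ, q.Prime → ∃ k ∈ Finset.Ioo 0 d, ¬ q ∣ c k) :
    (Finset.Ioo 0 d).gcd (fun k => (c k : ℤ)) = 1 := by
  set G := (Finset.Ioo 0 d).gcd (fun k => (c k : ℤ)) with hGdef
  have hnorm : normalize G = G := Finset.normalize_gcd
  have hG : G = (G.natAbs : ℤ) := by
    conv_lhs => rw [← hnorm, ← Int.abs_eq_normalize, Int.abs_eq_natAbs]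
  by_contra hne
  have hne' : G.natAbs ≠ 1 := by
    intro h1
    exact hne (by rw [hG, h1, Nat.cast_one])
  obtain ⟨q, hq, hqG⟩ := Nat.exists_prime_and_dvd hne'
  obtain ⟨k, hk, hknd⟩ := h q hq
  apply hknd
  have hdvd : G ∣ (c k : ℤ) := Finset.gcd_dvd hk
  rw [hG] at hdvd
  exact_mod_cast (Int.natCast_dvd_natCast.mpr hqG).trans hdvd

private lemma gen_const {d : ℕ} (hd2 : 2 ≤ d) (c : ℕ → ℕ) (hc1 : c 1 ≠ 0)
    (hG : (Finset.Ioo 0 d).gcd (fun k => (c k : ℤ)) = 1)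
    (x : ACMod d 1)
    (hrel : ∀ {a b : ℕ} (ha : a ∈ Finset.Ioo 0 d) (hb : b ∈ Finset.Ioo 0 d),
      (c b : ℤ) * x (b1 ha) = (c a : ℤ) * x (b1 hb)) :
    ∃ n : ℤ, ∀ {a : ℕ} (ha : a ∈ Finset.Ioo 0 d), x (b1 ha) = n * c a := by
  have h1 : (1 : ℕ) ∈ Finset.Ioo 0 d := by
    rw [Finset.mem_Ioo]; omega
  have hdvd : (c 1 : ℤ) ∣ x (b1 h1) := by
    have hd : (c 1 : ℤ) ∣ (Finset.Ioo 0 d).gcd (fun b => x (b1 h1) * (c b : ℤ)) := by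
      apply Finset.dvd_gcd
      intro b hb
      exact ⟨x (b1 hb), by rw [← hrel h1 hb]; ring⟩
    rw [Finset.gcd_mul_left, hG, mul_one, ← Int.abs_eq_normalize] at hd
    rcases abs_choice (x (b1 h1)) with he | he
    · rwa [he] at hd
    · rw [he] at hd; exact (dvd_neg).mp hd
  obtain ⟨n, hn⟩ := hdvd
  refine ⟨n, ?_⟩
  intro a ha
  have hc1' : (c 1 : ℤ) ≠ 0 := Int.natCast_ne_zero.mpr hc1
  apply mul_left_cancel₀ hc1'
  have hr := hrel ha h1
  linear_combination hr + (c a : ℤ) * hn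

private lemma ACHmk_eq (d k : ℕ) (w : ACZ d k) : ACHmk d k w = Submodule.Quotient.mk w := rfl


/-- `H¹(AC(d)) ≅ ℤ/p` if `d = pˡ` for a prime `p` and `l ≥ 1`, and `H¹(AC(d)) = 0`
otherwise; in the first case the class of the cocycle `∑_{k=1}^{pˡ-1} (1/p)·C(pˡ,k)·⟨k⟩`
is a generator. -/
theorem H1_aroneComplex (d : ℕ) (hd : 1 ≤ d) :
    (∀ p l : ℕ, p.Prime → 1 ≤ l → d = p ^ l →
      Nonempty (ACH d 1 ≃+ ZMod p) ∧
      ∃ z : ACZ d 1,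
        (z : ACMod d 1) = ∑ k ∈ Finset.Ioo 0 d, ((d.choose k / p : ℕ) : ℤ) • ACsing d k ∧
        ∀ y : ACH d 1, ∃ n : ℤ, y = n • ACHmk d 1 z) ∧
    ((¬ ∃ p l : ℕ, p.Prime ∧ 1 ≤ l ∧ d = p ^ l) → Subsingleton (ACH d 1)) := by
  constructor
  · rintro p l hp hl rfl
    have hp2 := hp.two_le
    have hp0 : (p : ℤ) ≠ 0 := by exact_mod_cast hp.pos.ne'
    have hd2 : 2 ≤ p ^ l := le_trans hp2 (Nat.le_self_pow (by omega) p)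
    have h1 : (1 : ℕ) ∈ Finset.Ioo 0 (p ^ l) := by rw [Finset.mem_Ioo]; omega
    set c : ℕ → ℕ := fun k => ((p ^ l).choose k) / p with hc
    have hdl : ∀ k ∈ Finset.Ioo 0 (p ^ l), p * c k = (p ^ l).choose k := by
      intro k hk
      rw [Finset.mem_Ioo] at hk
      exact Nat.mul_div_cancel' (hp.dvd_choose_pow (by omega) (by omega))
    have hdlZ : ∀ k ∈ Finset.Ioo 0 (p ^ l), (p : ℤ) * (c k : ℤ) = ((p ^ l).choose k : ℤ) := by
      intro k hk; exact_mod_cast hdl k hk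
    have hc1 : c 1 = p ^ (l - 1) := by
      show (p ^ l).choose 1 / p = p ^ (l - 1)
      rw [Nat.choose_one_right, show p ^ l = p ^ (l - 1) * p by
        rw [← pow_succ]; congr 1; omega, Nat.mul_div_cancel _ hp.pos]
    have hc1ne : c 1 ≠ 0 := by rw [hc1]; positivity
    have hk0mem : p ^ (l - 1) ∈ Finset.Ioo 0 (p ^ l) := by
      rw [Finset.mem_Ioo]
      exact ⟨pow_pos hp.pos _, Nat.pow_lt_pow_right hp.one_lt (by omega)⟩
    have hpc2 : ¬ p ∣ c (p ^ (l - 1)) := by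
      intro hcon
      apply NT1 hp hl
      obtain ⟨t, ht⟩ := hcon
      rw [← hdl _ hk0mem, ht]
      exact ⟨t, by ring⟩
    have hGA : (Finset.Ioo 0 (p ^ l)).gcd (fun k => (c k : ℤ)) = 1 := by
      apply gcd_one
      intro q hq
      by_cases hqp : q = p
      · rw [hqp]; exact ⟨p ^ (l - 1), hk0mem, hpc2⟩
      · refine ⟨1, h1, ?_⟩
        rw [hc1]
        intro hcon
        exact hqp ((Nat.prime_dvd_prime_iff_eq hq hp).mp (hq.dvd_of_dvd_pow hcon))
    -- the cocycle z1
    set z1 : ACMod (p ^ l) 1 :=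
      ∑ k ∈ Finset.Ioo 0 (p ^ l), (((p ^ l).choose k / p : ℕ) : ℤ) • ACsing (p ^ l) k with hz1
    have hz1app : ∀ {i : ℕ} (hi : i ∈ Finset.Ioo 0 (p ^ l)), z1 (b1 hi) = (c i : ℤ) := by
      intro i hi
      exact sum_sing_apply (fun k => ((c k : ℕ) : ℤ)) hi
    have hz1mem : z1 ∈ ACZ (p ^ l) 1 := by
      apply mem_ACZ1
      intro a b ha hb hab
      rw [hz1app ha, hz1app hb]
      have haI := ha; have hbI := hb
      rw [Finset.mem_Ioo] at haI hbI
      have hcast : ((p ^ l).choose a : ℤ) * ((p ^ l - a).choose (b - a) : ℤ)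
          = ((p ^ l).choose b : ℤ) * ((b).choose a : ℤ) := by
        exact_mod_cast congrArg (Nat.cast (R := ℤ)) (Nat.choose_mul (n := p ^ l) hab.le).symm
      have hA := hdlZ a ha
      have hB := hdlZ b hb
      apply mul_left_cancel₀ hp0
      linear_combination ((p ^ l - a).choose (b - a) : ℤ) * hA - ((b).choose a : ℤ) * hB + hcast
    set z : ACZ (p ^ l) 1 := ⟨z1, hz1mem⟩ with hzdef
    -- generation
    have hgen : ∀ x : ACMod (p ^ l) 1, x ∈ ACZ (p ^ l) 1 →
        ∃ n : ℤ, x = n • z1 := by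
      intro x hx
      have key : ∀ {a b : ℕ} (ha : a ∈ Finset.Ioo 0 (p ^ l)) (hb : b ∈ Finset.Ioo 0 (p ^ l)),
          a < b → (c b : ℤ) * x (b1 ha) = (c a : ℤ) * x (b1 hb) := by
        intro a b ha hb hab
        have hrel0 := ACZ1_rel hx ha hb hab
        have haI := ha; have hbI := hb
        rw [Finset.mem_Ioo] at haI hbI
        have hcast : ((p ^ l).choose a : ℤ) * ((p ^ l - a).choose (b - a) : ℤ)
            = ((p ^ l).choose b : ℤ) * ((b).choose a : ℤ) := by
          exact_mod_cast congrArg (Nat.cast (R := ℤ)) (Nat.choose_mul (n := p ^ l) hab.le).symm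
        have hA := hdlZ a ha
        have hB := hdlZ b hb
        have hCba : ((b).choose a : ℤ) ≠ 0 := by
          exact_mod_cast (Nat.choose_pos hab.le).ne'
        apply mul_left_cancel₀ (mul_ne_zero hp0 hCba)
        linear_combination x (b1 ha) * ((b).choose a : ℤ) * hB
          - x (b1 hb) * ((b).choose a : ℤ) * hA
          + ((p ^ l).choose a : ℤ) * hrel0 - x (b1 ha) * hcast
      have hrel : ∀ {a b : ℕ} (ha : a ∈ Finset.Ioo 0 (p ^ l)) (hb : b ∈ Finset.Ioo 0 (p ^ l)),
          (c b : ℤ) * x (b1 ha) = (c a : ℤ) * x (b1 hb) := by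
        intro a b ha hb
        rcases lt_trichotomy a b with h | h | h
        · exact key ha hb h
        · subst h; rfl
        · exact (key hb ha h).symm
      obtain ⟨n, hn⟩ := gen_const hd2 c hc1ne hGA x (fun {a b} ha hb => hrel ha hb)
      refine ⟨n, ext1 ?_⟩
      intro i hi
      rw [hn hi, Finsupp.smul_apply, hz1app hi, smul_eq_mul]
    -- p • z1 is a coboundary
    have hpz : (p : ℤ) • z1 ∈ ACB (p ^ l) 1 := by
      rw [mem_ACB1]
      refine ⟨-1, ext1 ?_⟩
      intro i hi
      rw [Finsupp.smul_apply, Finsupp.smul_apply, hz1app hi, wcoef hi, smul_eq_mul, smul_eq_mul]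
      have := hdlZ i hi
      linarith
    -- torsion
    have htor : ∀ n : ℤ, n • z1 ∈ ACB (p ^ l) 1 → (p : ℤ) ∣ n := by
      intro n hn
      rw [mem_ACB1] at hn
      obtain ⟨t, ht⟩ := hn
      have := DFunLike.congr_fun ht (b1 h1)
      rw [Finsupp.smul_apply, Finsupp.smul_apply, hz1app h1, wcoef h1,
        smul_eq_mul, smul_eq_mul] at this
      have hC1 := hdlZ 1 h1
      have hc1Z : (c 1 : ℤ) ≠ 0 := Int.natCast_ne_zero.mpr hc1ne
      refine ⟨-t, ?_⟩
      apply mul_right_cancel₀ hc1Z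
      linear_combination this + t * hC1
    -- the quotient setup
    set N := Submodule.comap (ACZ (p ^ l) 1).subtype (ACB (p ^ l) 1) with hN
    have hmemN : ∀ w : ACZ (p ^ l) 1, w ∈ N ↔ (w : ACMod (p ^ l) 1) ∈ ACB (p ^ l) 1 := by
      intro w; rw [hN, Submodule.mem_comap, Submodule.subtype_apply]
    have hmk_smul : ∀ (n : ℤ) (w : ACZ (p ^ l) 1),
        ACHmk (p ^ l) 1 (n • w) = n • ACHmk (p ^ l) 1 w := fun n w => rfl
    have hsurj' : ∀ y : ACH (p ^ l) 1, ∃ n : ℤ, y = n • ACHmk (p ^ l) 1 z := by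
      intro y
      obtain ⟨x, rfl⟩ := Submodule.Quotient.mk_surjective N y
      obtain ⟨n, hn⟩ := hgen x.1 x.2
      refine ⟨n, ?_⟩
      have hx : x = n • z := Subtype.ext (by rw [hn]; rfl)
      rw [show Submodule.Quotient.mk x = ACHmk (p ^ l) 1 x from rfl, hx, hmk_smul]
    -- build the iso
    have hfp : (zmultiplesHom (ACH (p ^ l) 1) (ACHmk (p ^ l) 1 z)) (p : ℤ) = 0 := by
      rw [zmultiplesHom_apply, ← hmk_smul, ACHmk_eq, Submodule.Quotient.mk_eq_zero, hmemN]
      exact hpz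
    set g : ZMod p →+ ACH (p ^ l) 1 :=
      ZMod.lift p ⟨zmultiplesHom (ACH (p ^ l) 1) (ACHmk (p ^ l) 1 z), hfp⟩ with hg
    have hg_apply : ∀ n : ℤ, g ((n : ℤ) : ZMod p) = n • ACHmk (p ^ l) 1 z := by
      intro n
      rw [hg, ZMod.lift_coe]
      rfl
    have hginj : Function.Injective g := by
      rw [injective_iff_map_eq_zero]
      intro x hx
      obtain ⟨n, rfl⟩ := ZMod.intCast_surjective x
      rw [hg_apply] at hx
      rw [ZMod.intCast_zmod_eq_zero_iff_dvd]
      apply htor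
      rw [← hmk_smul, ACHmk_eq, Submodule.Quotient.mk_eq_zero, hmemN] at hx
      exact hx
    have hgsurj : Function.Surjective g := by
      intro y
      obtain ⟨n, hn⟩ := hsurj' y
      exact ⟨((n : ℤ) : ZMod p), by rw [hg_apply, hn]⟩
    refine ⟨⟨(AddEquiv.ofBijective g ⟨hginj, hgsurj⟩).symm⟩, z, rfl, hsurj'⟩
  · intro hnot
    apply Submodule.Quotient.subsingleton_iff.mpr
    rw [Submodule.eq_top_iff']
    intro xz
    rw [Submodule.mem_comap, Submodule.subtype_apply]
    rcases eq_or_lt_of_le hd with hd1 | hd2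
    · have hempty : (xz : ACMod d 1) = 0 := by
        apply ext1
        intro i hi
        rw [Finset.mem_Ioo] at hi
        omega
      rw [hempty]
      exact zero_mem _
    · have hd2' : 2 ≤ d := hd2
      have hx := xz.2
      have hc1ne : d.choose 1 ≠ 0 := by rw [Nat.choose_one_right]; omega
      have hG : (Finset.Ioo 0 d).gcd (fun k => (d.choose k : ℤ)) = 1 := by
        apply gcd_one
        intro q hq
        have hdvd : q ^ (d.factorization q) ∣ d := Nat.ordProj_dvd d q
        have hndvd : ¬ q ^ ((d.factorization q) + 1) ∣ d :=
          Nat.pow_succ_factorization_not_dvd (by omega) hq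
        have hlt : q ^ (d.factorization q) < d := by
          rcases lt_or_eq_of_le (Nat.le_of_dvd (by omega) hdvd) with h | h
          · exact h
          · exfalso
            apply hnot
            refine ⟨q, d.factorization q, hq, ?_, h.symm⟩
            rcases Nat.eq_zero_or_pos (d.factorization q) with hm0 | hm1
            · rw [hm0] at h; simp at h; omega
            · exact hm1
        refine ⟨q ^ (d.factorization q), by
          rw [Finset.mem_Ioo]; exact ⟨pow_pos hq.pos _, hlt⟩, ?_⟩
        exact NT2 hq (by omega) hdvd hndvd
      have key : ∀ {a b : ℕ} (ha : a ∈ Finset.Ioo 0 d) (hb : b ∈ Finset.Ioo 0 d),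
          a < b → (d.choose b : ℤ) * (xz : ACMod d 1) (b1 ha)
            = (d.choose a : ℤ) * (xz : ACMod d 1) (b1 hb) := by
        intro a b ha hb hab
        have hrel0 := ACZ1_rel hx ha hb hab
        have haI := ha; have hbI := hb
        rw [Finset.mem_Ioo] at haI hbI
        have hcast : (d.choose a : ℤ) * ((d - a).choose (b - a) : ℤ)
            = (d.choose b : ℤ) * ((b).choose a : ℤ) := by
          exact_mod_cast congrArg (Nat.cast (R := ℤ)) (Nat.choose_mul (n := d) hab.le).symm
        have hCba : ((b).choose a : ℤ) ≠ 0 := by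
          exact_mod_cast (Nat.choose_pos hab.le).ne'
        apply mul_left_cancel₀ hCba
        linear_combination (d.choose a : ℤ) * hrel0 - (xz : ACMod d 1) (b1 ha) * hcast
      have hrel : ∀ {a b : ℕ} (ha : a ∈ Finset.Ioo 0 d) (hb : b ∈ Finset.Ioo 0 d),
          (d.choose b : ℤ) * (xz : ACMod d 1) (b1 ha)
            = (d.choose a : ℤ) * (xz : ACMod d 1) (b1 hb) := by
        intro a b ha hb
        rcases lt_trichotomy a b with h | h | h
        · exact key ha hb h
        · subst h; rfl
        · exact (key hb ha h).symm
      obtain ⟨n, hn⟩ := gen_const hd2' (fun k => d.choose k) hc1ne hG (xz : ACMod d 1)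
        (fun {a b} ha hb => hrel ha hb)
      rw [mem_ACB1]
      refine ⟨-n, ext1 ?_⟩
      intro i hi
      rw [hn hi, Finsupp.smul_apply, wcoef hi, smul_eq_mul]
      ring

end
end

section
/- Let d ≥ 2 be an integer and let g be the greatest common divisor of the binomial coefficients C(d,k) for 0 < k < d. Then the group of solutions in ℤ^{d−1} of the binomial system for d over ℤ is infinite cyclic, generated by the tuple ((1/g)·C(d,1), (1/g)·C(d,2), …, (1/g)·C(d,d−1)). -/
/-- The binomial system for `d` over a commutative ring `R`:
`C(k,r)·a_k = C(d-r,d-k)·a_r` for all `0 < r < k < d`. -/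
def BinomSystem (d : ℕ) {R : Type*} [CommRing R] (a : ℕ → R) : Prop :=
  ∀ r k : ℕ, 0 < r → r < k → k < d →
    (Nat.choose k r : R) * a k = (Nat.choose (d - r) (d - k) : R) * a r

/-- for `d ≥ 2`, with `g = gcd{C(d,k) : 0 < k < d}`, the solutions in `ℤ^{d-1}` of
the binomial system for `d` form an infinite cyclic group generated by
`((1/g)·C(d,1), …, (1/g)·C(d,d-1))`. -/
theorem binomSystem_int_solutions (d : ℕ) (hd : 2 ≤ d) :
    BinomSystem d (fun k => ((d.choose k / (Finset.Ioo 0 d).gcd (fun j => d.choose j) : ℕ) : ℤ)) ∧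
    ∀ b : ℕ → ℤ, BinomSystem d b →
      ∃! n : ℤ, ∀ k : ℕ, 0 < k → k < d →
        b k = n * ((d.choose k / (Finset.Ioo 0 d).gcd (fun j => d.choose j) : ℕ) : ℤ) := by
  set g : ℕ := (Finset.Ioo 0 d).gcd (fun j => d.choose j) with hg
  set c : ℕ → ℕ := fun k => d.choose k / g with hc
  have h1mem : (1 : ℕ) ∈ Finset.Ioo 0 d := by
    simp [Finset.mem_Ioo]; omega
  have hgdvd : ∀ k, 0 < k → k < d → g ∣ d.choose k := fun k h1 h2 =>
    Finset.gcd_dvd (by simp [Finset.mem_Ioo, h1, h2])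
  have hgpos : 0 < g := by
    rcases Nat.eq_zero_or_pos g with h | h
    · exfalso
      have := Finset.gcd_eq_zero_iff.1 h 1 h1mem
      simp at this; omega
    · exact h
  -- key choose identity restated
  have hchoose : ∀ r k : ℕ, 0 < r → r < k → k < d →
      d.choose k * k.choose r = d.choose r * (d - r).choose (d - k) := by
    intro r k h1 h2 h3
    have h4 : (d - r).choose (d - k) = (d - r).choose (k - r) := by
      have : d - k = (d - r) - (k - r) := by omega
      rw [this, Nat.choose_symm (by omega)]
    rw [h4, Nat.choose_mul (by omega)]
  have hcg : ∀ k, 0 < k → k < d → g * c k = d.choose k := fun k h1 h2 =>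
    Nat.mul_div_cancel' (hgdvd k h1 h2)
  -- first part
  have part1 : BinomSystem d (fun k => ((c k : ℕ) : ℤ)) := by
    intro r k h1 h2 h3
    have hnat : k.choose r * c k = (d - r).choose (d - k) * c r := by
      have := hchoose r k h1 h2 h3
      have h5 : g * (k.choose r * c k) = g * ((d - r).choose (d - k) * c r) := by
        rw [show g * (k.choose r * c k) = k.choose r * (g * c k) by ring,
          show g * ((d - r).choose (d - k) * c r) = (d - r).choose (d - k) * (g * c r) by ring,
          hcg k (by omega) h3, hcg r h1 (by omega), Nat.mul_comm, this, Nat.mul_comm]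
      exact Nat.eq_of_mul_eq_mul_left hgpos h5
    simp only []
    exact_mod_cast hnat
  refine ⟨part1, ?_⟩
  intro b hb
  -- key: b k * C(d,r) = b r * C(d,k) for all valid r k (ordered)
  have hkey : ∀ r k : ℕ, 0 < r → r < k → k < d →
      b k * (d.choose r : ℤ) = b r * (d.choose k : ℤ) := by
    intro r k h1 h2 h3
    have heq := hb r k h1 h2 h3
    have hcc : (d.choose k : ℤ) * k.choose r = (d.choose r : ℤ) * (d - r).choose (d - k) := by
      exact_mod_cast hchoose r k h1 h2 h3
    have hpos : (k.choose r : ℤ) ≠ 0 := by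
      have := Nat.choose_pos (show r ≤ k by omega)
      positivity
    have : (k.choose r : ℤ) * (b k * (d.choose r : ℤ)) =
        (k.choose r : ℤ) * (b r * (d.choose k : ℤ)) := by
      calc (k.choose r : ℤ) * (b k * d.choose r)
          = ((k.choose r : ℤ) * b k) * d.choose r := by ring
        _ = ((d - r).choose (d - k) : ℤ) * b r * d.choose r := by rw [heq]
        _ = ((d.choose r : ℤ) * (d - r).choose (d - k)) * b r := by ring
        _ = ((d.choose k : ℤ) * k.choose r) * b r := by rw [hcc]
        _ = (k.choose r : ℤ) * (b r * d.choose k) := by ring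
    exact mul_left_cancel₀ hpos this
  -- symmetric version with c
  have hkeyc : ∀ r k : ℕ, 0 < r → r < d → 0 < k → k < d →
      b k * (c r : ℤ) = b r * (c k : ℤ) := by
    intro r k h1 h2 h3 h4
    have base : b k * (d.choose r : ℤ) = b r * (d.choose k : ℤ) := by
      rcases lt_trichotomy r k with h | h | h
      · exact hkey r k h1 h h4
      · subst h; ring
      · have := hkey k r h3 h h2
        linarith [this]
    have hgz : (g : ℤ) ≠ 0 := by positivity
    have : (g : ℤ) * (b k * (c r : ℤ)) = (g : ℤ) * (b r * (c k : ℤ)) := by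
      have e1 : (g : ℤ) * (c r : ℤ) = (d.choose r : ℤ) := by exact_mod_cast hcg r h1 h2
      have e2 : (g : ℤ) * (c k : ℤ) = (d.choose k : ℤ) := by exact_mod_cast hcg k h3 h4
      calc (g : ℤ) * (b k * c r) = b k * ((g : ℤ) * c r) := by ring
        _ = b k * (d.choose r : ℤ) := by rw [e1]
        _ = b r * (d.choose k : ℤ) := base
        _ = (g : ℤ) * (b r * c k) := by rw [← e2]; ring
    exact mul_left_cancel₀ hgz this
  -- gcd of c is 1
  have hgcdc : (Finset.Ioo 0 d).gcd c = 1 := by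
    have h5 : ((Finset.Ioo 0 d).gcd fun j => g * c j) = g * (Finset.Ioo 0 d).gcd c := by
      simpa using (Finset.gcd_mul_left (s := Finset.Ioo 0 d) (f := c) (a := g))
    have h6 : ((Finset.Ioo 0 d).gcd fun j => g * c j) = g := by
      rw [Finset.gcd_congr rfl (fun j hj => by
        simp only [Finset.mem_Ioo] at hj
        exact hcg j hj.1 hj.2)]
    have := h6 ▸ h5
    nlinarith [this]
  have hc1pos : 0 < c 1 := by
    have := hcg 1 one_pos (by omega)
    simp [Nat.choose_one_right] at this
    by_contra h
    simp only [not_lt, Nat.le_zero] at h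
    rw [h] at this; omega
  -- c 1 divides b 1
  have hdvd : (c 1 : ℤ) ∣ b 1 := by
    have hnat : c 1 ∣ (b 1).natAbs := by
      have h7 : ∀ j ∈ Finset.Ioo 0 d, c 1 ∣ (b 1).natAbs * c j := by
        intro j hj
        simp only [Finset.mem_Ioo] at hj
        have := hkeyc 1 j one_pos (by omega) hj.1 hj.2
        -- b j * c 1 = b 1 * c j  ⇒ (c 1 : ℤ) ∣ b 1 * c j
        have hz : (c 1 : ℤ) ∣ b 1 * (c j : ℤ) := ⟨b j, by linarith [this]⟩
        have := Int.natAbs_dvd_natAbs.2 hz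
        simpa [Int.natAbs_mul] using this
      have h8 : c 1 ∣ (Finset.Ioo 0 d).gcd (fun j => (b 1).natAbs * c j) :=
        Finset.dvd_gcd h7
      rwa [Finset.gcd_mul_left, hgcdc, normalize_eq, mul_one] at h8
    exact (Int.natAbs_dvd_natAbs (a := (c 1 : ℤ)) (b := b 1)).1 (by simpa using hnat)
  obtain ⟨n, hn⟩ := hdvd
  have hc1z : (c 1 : ℤ) ≠ 0 := by positivity
  refine ⟨n, fun k h1 h2 => ?_, fun m hm => ?_⟩
  · have := hkeyc 1 k one_pos (by omega) h1 h2
    -- b k * c 1 = b 1 * c k = c 1 * n * c k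
    have : b k * (c 1 : ℤ) = (n * (c k : ℤ)) * (c 1 : ℤ) := by
      rw [this, hn]; ring
    exact mul_right_cancel₀ hc1z this
  · have h9 := hm 1 one_pos (by omega)
    rw [hn] at h9
    have : m * (c 1 : ℤ) = n * (c 1 : ℤ) := by linarith [h9]
    exact mul_right_cancel₀ hc1z this
end

section
/- Let p be a prime and let d, r be natural numbers with d ≥ r. If p divides r, then v_p(C(d,r)) = v_p(C(⌊d/p⌋, r/p)), where ⌊d/p⌋ is the integer part of d/p. -/
lemma digits_sum_div (p n : ℕ) (hp : 1 < p) :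
    (p.digits n).sum = n % p + (p.digits (n / p)).sum := by
  rcases Nat.eq_zero_or_pos n with rfl | hn
  · simp
  · rw [Nat.digits_def' hp hn]; simp

/-- for a prime `p` and `r ≤ d` with `p ∣ r`,
`v_p(C(d,r)) = v_p(C(⌊d/p⌋, r/p))`. -/
theorem padicValNat_choose_div_p (p d r : ℕ) (hp : p.Prime) (hrd : r ≤ d) (hpr : p ∣ r) :
    padicValNat p (d.choose r) = padicValNat p ((d / p).choose (r / p)) := by
  haveI : Fact p.Prime := ⟨hp⟩
  have hp1 : 1 < p := hp.one_lt
  have hrd' : r / p ≤ d / p := Nat.div_le_div_right hrd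
  have h1 := sub_one_mul_padicValNat_choose_eq_sub_sum_digits (p := p) hrd
  have h2 := sub_one_mul_padicValNat_choose_eq_sub_sum_digits (p := p) hrd'
  obtain ⟨k, rfl⟩ := hpr
  have hsub : d / p - p * k / p = (d - p * k) / p := by
    rw [Nat.mul_div_cancel_left _ hp.pos, Nat.sub_mul_div]
  have hd := digits_sum_div p d hp1
  have hdr := digits_sum_div p (d - p * k) hp1
  have hr : (p.digits (p * k / p)).sum = (p.digits k).sum := by
    rw [Nat.mul_div_cancel_left _ hp.pos]
  have hr' := digits_sum_div p (p * k) hp1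
  rw [Nat.mul_mod_right, zero_add, Nat.mul_div_cancel_left _ hp.pos] at hr'
  have hmod : (d - p * k) % p = d % p := by
    conv_rhs => rw [← Nat.sub_add_cancel hrd]
    simp [Nat.add_mul_mod_self_left, Nat.mul_mod_right, Nat.add_mod]
  rw [hsub, hr] at h2
  have key : (p - 1) * padicValNat p (d.choose (p * k)) =
      (p - 1) * padicValNat p ((d / p).choose (p * k / p)) := by
    rw [h1, h2]
    omega
  have := Nat.eq_of_mul_eq_mul_left (by omega : 0 < p - 1) key
  exact this
end

section
/- Let p be a prime not dividing the integer d ≥ 2. Then θ_p(d) = 1 if d = p^l + 1 for some integer l ≥ 1, and θ_p(d) = 0 otherwise. -/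
/-- `θ_p(d)`: the minimum of `v_p(C(d,k)) + v_p(C(k,r))` over pairs `0 < r < k < d` with exactly
one of `k, r` divisible by `p` (and `0` if no such pair exists; note `sInf ∅ = 0` in `ℕ`). -/
noncomputable def theta (p d : ℕ) : ℕ :=
  sInf {t | ∃ r k : ℕ, 0 < r ∧ r < k ∧ k < d ∧ Xor' (p ∣ k) (p ∣ r) ∧
    t = padicValNat p (d.choose k) + padicValNat p (k.choose r)}

/-- Single Lucas step: divisibility of a binomial coefficient by `p` transfers along base-`p`
decomposition. -/
lemma dvd_choose_lucas_step {p : ℕ} (hp : p.Prime) {n m a c : ℕ} (ha : a < p) (hc : c < p) :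
    p ∣ (p * n + a).choose (p * m + c) ↔ p ∣ a.choose c * n.choose m := by
  haveI := Fact.mk hp
  have h := Choose.choose_modEq_choose_mod_mul_choose_div_nat
    (p := p) (n := p * n + a) (k := p * m + c)
  rw [Nat.mul_add_mod, Nat.mul_add_mod, Nat.mod_eq_of_lt ha, Nat.mod_eq_of_lt hc,
    Nat.mul_add_div hp.pos, Nat.mul_add_div hp.pos, Nat.div_eq_of_lt ha, Nat.div_eq_of_lt hc,
    add_zero, add_zero] at h
  constructor
  · intro hd
    exact Nat.modEq_zero_iff_dvd.mp (h.symm.trans (Nat.modEq_zero_iff_dvd.mpr hd))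
  · intro hd
    exact Nat.modEq_zero_iff_dvd.mp (h.trans (Nat.modEq_zero_iff_dvd.mpr hd))

/-- If `q ≥ 2` is not a power of `p`, some inner binomial coefficient avoids `p`. -/
lemma exists_not_dvd_choose {p : ℕ} (hp : p.Prime) :
    ∀ q, 2 ≤ q → (∀ l, q ≠ p ^ l) → ∃ u, 0 < u ∧ u < q ∧ ¬ p ∣ q.choose u := by
  intro q
  induction q using Nat.strong_induction_on with
  | _ q ih =>
    intro hq hqp
    by_cases hdvd : p ∣ q
    · obtain ⟨q', rfl⟩ := hdvd
      have hp2 := hp.two_le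
      have hq2 : 2 ≤ q' := by
        rcases Nat.lt_or_ge q' 2 with h | h
        · interval_cases q'
          · simp at hq
          · have := hqp 1
            simp at this
        · exact h
      have hq'p : ∀ l, q' ≠ p ^ l := by
        intro l h
        exact hqp (l + 1) (by rw [h, pow_succ, mul_comm])
      have hlt : q' < p * q' := by nlinarith
      obtain ⟨u', hu0, hu1, hu2⟩ := ih q' hlt hq2 hq'p
      refine ⟨p * u', by positivity, by nlinarith, ?_⟩
      have := dvd_choose_lucas_step hp (n := q') (m := u') (a := 0) (c := 0) hp.pos hp.pos
      simp only [add_zero] at this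
      rw [this]
      simpa using hu2
    · exact ⟨1, one_pos, by omega, by simpa using hdvd⟩

/-- for a prime `p ∤ d` with `d ≥ 2`, `θ_p(d) = 1` if `d = pˡ + 1` for some
`l ≥ 1`, and `θ_p(d) = 0` otherwise. -/
theorem theta_eval (p d : ℕ) (hp : p.Prime) (hd : 2 ≤ d) (hpd : ¬ p ∣ d) :
    ((∃ l : ℕ, 1 ≤ l ∧ d = p ^ l + 1) → theta p d = 1) ∧
    ((¬ ∃ l : ℕ, 1 ≤ l ∧ d = p ^ l + 1) → theta p d = 0) := by
  haveI := Fact.mk hp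
  have hp2 := hp.two_le
  set S : Set ℕ := {t | ∃ r k : ℕ, 0 < r ∧ r < k ∧ k < d ∧ Xor' (p ∣ k) (p ∣ r) ∧
    t = padicValNat p (d.choose k) + padicValNat p (k.choose r)} with hS
  have htheta : theta p d = sInf S := rfl
  constructor
  · rintro ⟨l, hl, rfl⟩
    -- exceptional case d = p ^ l + 1
    have hplpos : 0 < p ^ l := pow_pos hp.pos l
    -- 0 is not in S
    have h0 : (0 : ℕ) ∉ S := by
      rintro ⟨r, k, hr, hrk, hkd, hxor, ht⟩
      have hkle : k ≤ p ^ l := by omega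
      rcases eq_or_lt_of_le hkle with hkeq | hklt
      · -- k = p ^ l : p divides k.choose r
        have hdvd : p ∣ k.choose r := by
          rw [hkeq]
          exact hp.dvd_choose_pow (by omega) (by omega)
        have h1 : 1 ≤ padicValNat p (k.choose r) :=
          one_le_padicValNat_of_dvd (Nat.choose_pos (by omega)).ne' hdvd
        omega
      · -- k < p ^ l : p divides d.choose k
        have hk2 : 2 ≤ k := by omega
        have hdvd : p ∣ (p ^ l + 1).choose k := by
          obtain ⟨k', rfl⟩ : ∃ k', k = k' + 1 := ⟨k - 1, by omega⟩
          rw [Nat.choose_succ_succ']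
          exact dvd_add (hp.dvd_choose_pow (by omega) (by omega))
            (hp.dvd_choose_pow (by omega) (by omega))
        have h1 : 1 ≤ padicValNat p ((p ^ l + 1).choose k) :=
          one_le_padicValNat_of_dvd (Nat.choose_pos (by omega)).ne' hdvd
        omega
    -- 1 is in S
    have h1 : (1 : ℕ) ∈ S := by
      rcases eq_or_lt_of_le hl with hl1 | hl2
      · -- l = 1 : take (r, k) = (1, p)
        have hpl : p ^ l = p := by rw [← hl1, pow_one]
        refine ⟨1, p, one_pos, hp.one_lt, by omega, ?_, ?_⟩
        · exact Or.inl ⟨dvd_refl p, fun h => by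
            have := Nat.le_of_dvd one_pos h
            omega⟩
        · rw [hpl, Nat.choose_succ_self_right, Nat.choose_one_right]
          have hnd : ¬ p ∣ p + 1 := fun h => by
            have : p ∣ 1 := (Nat.dvd_add_right (dvd_refl p)).mp h
            have := Nat.le_of_dvd one_pos this
            omega
          rw [padicValNat.eq_zero_of_not_dvd hnd, padicValNat_self]
      · -- l ≥ 2 : take (r, k) = (p ^ (l-1), p ^ (l-1) + 1)
        set P := p ^ (l - 1) with hP
        have hPp : p ∣ P := by
          rw [hP]
          exact dvd_pow_self p (by omega)
        have hPl : P * p = p ^ l := by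
          rw [hP, ← pow_succ]
          congr 1
          omega
        have hP2 : 2 ≤ P := by
          calc 2 ≤ p := hp2
          _ ≤ P := Nat.le_of_dvd (by positivity) hPp
        have hPltpl : P + 1 < p ^ l := by nlinarith
        refine ⟨P, P + 1, by positivity, by omega, by omega, ?_, ?_⟩
        · refine Or.inr ⟨hPp, fun h => ?_⟩
          have : p ∣ 1 := (Nat.dvd_add_right hPp).mp h
          have := Nat.le_of_dvd one_pos this
          omega
        · have hv2 : padicValNat p ((P + 1).choose P) = 0 := by
            rw [Nat.choose_succ_self_right]
            exact padicValNat.eq_zero_of_not_dvd (fun h => by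
              have : p ∣ 1 := (Nat.dvd_add_right hPp).mp h
              have := Nat.le_of_dvd one_pos this
              omega)
          have hv1 : padicValNat p ((p ^ l + 1).choose (P + 1)) = 1 := by
            have hlog : Nat.log p (p ^ l + 1) < l + 1 := by
              rw [Nat.log_lt_iff_lt_pow hp.one_lt (by positivity)]
              have : p ^ (l + 1) = p ^ l * p := pow_succ p l
              nlinarith
            rw [padicValNat_choose (by omega) hlog]
            have hfil : (Finset.filter
                (fun i => p ^ i ≤ (P + 1) % p ^ i + (p ^ l + 1 - (P + 1)) % p ^ i)
                (Finset.Ico 1 (l + 1))) = {l} := by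
              ext i
              simp only [Finset.mem_filter, Finset.mem_Ico, Finset.mem_singleton]
              constructor
              · rintro ⟨⟨hi1, hi2⟩, hcond⟩
                by_contra hne
                have hile : i ≤ l - 1 := by omega
                have hdvdP : p ^ i ∣ P := by
                  rw [hP]
                  exact pow_dvd_pow p hile
                obtain ⟨c, hc⟩ := hdvdP
                have hmod1 : (P + 1) % p ^ i = 1 := by
                  rw [hc, Nat.mul_add_mod]
                  exact Nat.mod_eq_of_lt (by
                    calc 1 < p := hp.one_lt
                    _ ≤ p ^ i := Nat.le_self_pow (by omega) p)
                have hmod2 : (p ^ l + 1 - (P + 1)) % p ^ i = 0 := by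
                  have hsub : p ^ l + 1 - (P + 1) = p ^ l - P := by omega
                  rw [hsub]
                  exact Nat.mod_eq_zero_of_dvd
                    (Nat.dvd_sub (pow_dvd_pow p (by omega)) ⟨c, hc⟩)
                rw [hmod1, hmod2] at hcond
                have : 1 < p ^ i := by
                  calc 1 < p := hp.one_lt
                  _ ≤ p ^ i := Nat.le_self_pow (by omega) p
                omega
              · intro hi
                rw [hi]
                refine ⟨⟨by omega, by omega⟩, ?_⟩
                have hm1 : (P + 1) % p ^ l = P + 1 := Nat.mod_eq_of_lt hPltpl
                have hsub : p ^ l + 1 - (P + 1) = p ^ l - P := by omega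
                have hm2 : (p ^ l - P) % p ^ l = p ^ l - P :=
                  Nat.mod_eq_of_lt (by omega)
                rw [hm1, hsub, hm2]
                omega
            rw [hfil]
            simp
          rw [hv1, hv2]
    rw [htheta]
    have hne : S.Nonempty := ⟨1, h1⟩
    have hmem := Nat.sInf_mem hne
    have hle := Nat.sInf_le h1
    have : sInf S ≠ 0 := fun h => h0 (h ▸ hmem)
    omega
  · intro hne
    rw [htheta]
    rcases Nat.lt_or_ge d p with hdp | hdp
    · -- d < p : the set is empty
      apply Nat.sInf_eq_zero.mpr
      right
      rw [Set.eq_empty_iff_forall_notMem]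
      rintro t ⟨r, k, hr, hrk, hkd, hxor, ht⟩
      have hnk : ¬ p ∣ k := fun h => by have := Nat.le_of_dvd (by omega) h; omega
      have hnr : ¬ p ∣ r := fun h => by have := Nat.le_of_dvd (by omega) h; omega
      rcases hxor with ⟨h, _⟩ | ⟨h, _⟩ <;> [exact hnk h; exact hnr h]
    · -- d > p
      have hdgt : p < d := lt_of_le_of_ne hdp (fun h => hpd (h ▸ dvd_refl p))
      obtain ⟨q, b, hqb, hbp⟩ : ∃ q b, p * q + b = d ∧ b < p :=
        ⟨d / p, d % p, Nat.div_add_mod d p, Nat.mod_lt d hp.pos⟩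
      have hb1 : 1 ≤ b := by
        rcases Nat.eq_zero_or_pos b with h | h
        · subst h
          exact absurd ⟨q, by omega⟩ hpd
        · exact h
      have hq1 : 1 ≤ q := by
        by_contra h
        have hq0 : q = 0 := by omega
        subst hq0
        simp at hqb
        omega
      apply Nat.sInf_eq_zero.mpr
      left
      rcases Nat.lt_or_ge b 2 with hb2 | hb2
      · -- b = 1
        have hbeq : b = 1 := by omega
        have hq2 : 2 ≤ q := by
          rcases Nat.lt_or_ge q 2 with h | h
          · have h1 : q = 1 := by omega
            have h2 : p * q = p := by rw [h1, mul_one]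
            exact absurd ⟨1, le_refl 1, by rw [pow_one]; omega⟩ hne
          · exact h
        have hqnp : ∀ l, q ≠ p ^ l := by
          intro l h
          have hl1 : 1 ≤ l := by
            rcases Nat.eq_zero_or_pos l with h0 | h0
            · subst h0; simp at h; omega
            · exact h0
          exact hne ⟨l + 1, by omega, by rw [← hqb, hbeq, h, pow_succ, mul_comm]⟩
        obtain ⟨u, hu0, hu1, hu2⟩ := exists_not_dvd_choose hp q hq2 hqnp
        have hmul : p * u < p * q := Nat.mul_lt_mul_of_pos_left hu1 hp.pos
        refine ⟨p * u, p * u + 1, by positivity, by omega, by omega, ?_, ?_⟩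
        · refine Or.inr ⟨Dvd.intro u rfl, fun h => ?_⟩
          have : p ∣ 1 := (Nat.dvd_add_right ⟨u, rfl⟩).mp h
          have := Nat.le_of_dvd one_pos this
          omega
        · have hv1 : padicValNat p (d.choose (p * u + 1)) = 0 := by
            apply padicValNat.eq_zero_of_not_dvd
            rw [← hqb, hbeq]
            rw [dvd_choose_lucas_step hp hp.one_lt hp.one_lt]
            simpa using hu2
          have hv2 : padicValNat p ((p * u + 1).choose (p * u)) = 0 := by
            apply padicValNat.eq_zero_of_not_dvd
            rw [Nat.choose_succ_self_right]
            intro h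
            have : p ∣ 1 := (Nat.dvd_add_right ⟨u, rfl⟩).mp h
            have := Nat.le_of_dvd one_pos this
            omega
          rw [hv1, hv2]
      · -- b ≥ 2
        refine ⟨p * q, p * q + (b - 1), by positivity, by omega, by omega, ?_, ?_⟩
        · refine Or.inr ⟨Dvd.intro q rfl, fun h => ?_⟩
          have : p ∣ b - 1 := (Nat.dvd_add_right ⟨q, rfl⟩).mp h
          have := Nat.le_of_dvd (by omega) this
          omega
        · have hv1 : padicValNat p (d.choose (p * q + (b - 1))) = 0 := by
            apply padicValNat.eq_zero_of_not_dvd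
            rw [← hqb]
            rw [dvd_choose_lucas_step hp hbp (by omega)]
            have hbc : b.choose (b - 1) = b := by
              obtain ⟨b', rfl⟩ : ∃ b', b = b' + 1 := ⟨b - 1, by omega⟩
              simp [Nat.choose_succ_self_right]
            rw [hbc, Nat.choose_self, mul_one]
            intro h
            have := Nat.le_of_dvd (by omega) h
            omega
          have hv2 : padicValNat p ((p * q + (b - 1)).choose (p * q)) = 0 := by
            apply padicValNat.eq_zero_of_not_dvd
            have h := dvd_choose_lucas_step hp (show b - 1 < p by omega) hp.pos
              (n := q) (m := q)
            rw [add_zero] at h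
            rw [h]
            simp only [Nat.choose_zero_right, Nat.choose_self, one_mul, mul_one]
            intro h'
            have := Nat.le_of_dvd one_pos h'
            omega
          rw [hv1, hv2]
end
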